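/- Let G be a group, I ⊴ G a normal subgroup with G/I cyclic (topologically) generated by σ, and A a G-module. The composite of the inflation map from H¹(G/I, A^I) with restriction, together with the exactness of inflation-restriction, implies: the kernel of the natural map H¹(G, A[p])/H¹_nr(G, A[p]) → H¹(G, A)[p]/H¹_nr(G, A)[p] injects into ker( H¹(I, A[p])^{G/I} → H¹(I, A)^{G/I}[p] ), which (when I acts on A through a p-divisible quotient as in the Kummer sequence) is isomorphic to (H⁰(I, A)/p·H⁰(I, A))^{G/I}. -/

import Mathlib

set_option linter.unnecessarySimpa false

section

variable (G : Type*) [Group G] (A : Type*) [AddCommGroup A] [DistribMulAction G A]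

/-- 1-cocycles of `G` with values in the `G`-module `A`. -/
def Z1 : AddSubgroup (G → A) where
  carrier := {f | ∀ g h : G, f (g * h) = f g + g • f h}
  zero_mem' := by intro g h; simp
  add_mem' := by
    intro f₁ f₂ h₁ h₂ g h
    simp only [Pi.add_apply, h₁ g h, h₂ g h, smul_add]
    abel
  neg_mem' := by
    intro f hf g h
    simp only [Pi.neg_apply, hf g h, smul_neg]
    abel

/-- 1-coboundaries of `G` with values in `A`. -/
def B1 : AddSubgroup (G → A) where
  carrier := {f | ∃ a : A, ∀ g : G, f g = g • a - a}
  zero_mem' := ⟨0, by simp⟩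
  add_mem' := by
    rintro f₁ f₂ ⟨a, ha⟩ ⟨b, hb⟩
    refine ⟨a + b, fun g => ?_⟩
    simp only [Pi.add_apply, ha g, hb g, smul_add]
    abel
  neg_mem' := by
    rintro f ⟨a, ha⟩
    refine ⟨-a, fun g => ?_⟩
    simp only [Pi.neg_apply, ha g, smul_neg]
    abel

/-- First group cohomology `H¹(G, A) = Z¹/B¹`. -/
abbrev H1 := Z1 G A ⧸ ((B1 G A).addSubgroupOf (Z1 G A))

variable {A} {B : Type*} [AddCommGroup B] [DistribMulAction G B]

/-- The map on 1-cocycles induced by an equivariant homomorphism `A →+ B`. -/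
def Z1map (φ : A →+ B) (hφ : ∀ (g : G) (a : A), φ (g • a) = g • φ a) :
    Z1 G A →+ Z1 G B where
  toFun f := ⟨φ ∘ (f : G → A), by
    intro g h
    have hf := f.2 g h
    simp only [Function.comp_apply, hf, map_add, hφ]⟩
  map_zero' := by ext g; simp
  map_add' f₁ f₂ := by ext g; simp

/-- The map on `H¹` induced by an equivariant homomorphism `A →+ B`. -/
def H1map (φ : A →+ B) (hφ : ∀ (g : G) (a : A), φ (g • a) = g • φ a) :
    H1 G A →+ H1 G B :=
  QuotientAddGroup.map _ _ (Z1map G φ hφ) (by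
    rintro ⟨f, hf⟩ hmem
    rcases hmem with ⟨a, ha⟩
    exact ⟨φ a, fun g => by
      have := ha g
      try simp only [AddSubgroup.coe_subtype] at this
      simp [Z1map, this, hφ, map_sub]⟩)

variable (A)

/-- The `p`-torsion subgroup `A[p]`. -/
def ptors (p : ℕ) : AddSubgroup A where
  carrier := {a | p • a = 0}
  zero_mem' := by simp
  add_mem' := by
    intro a b ha hb
    show p • (a + b) = 0
    rw [smul_add]; simp only [Set.mem_setOf_eq] at ha hb; rw [ha, hb, add_zero]
  neg_mem' := by
    intro a ha
    show p • (-a) = 0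
    simp only [Set.mem_setOf_eq] at ha; rw [smul_neg, ha, neg_zero]

/-- `A[p]` is a `G`-submodule. -/
instance (p : ℕ) : DistribMulAction G (ptors A p) where
  smul g a := ⟨g • (a : A), by
    show p • (g • (a : A)) = 0
    have h := (DistribMulAction.toAddMonoidHom A g).map_nsmul p (a : A)
    have ha : p • (a : A) = 0 := a.2
    simpa [ha] using h.symm⟩
  one_smul a := Subtype.ext (one_smul G (a : A))
  mul_smul g h a := Subtype.ext (mul_smul g h (a : A))
  smul_zero g := Subtype.ext (smul_zero g)
  smul_add g a b := Subtype.ext (smul_add g (a : A) (b : A))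

/-- The invariants `H⁰(G, A) = A^G`. -/
def fixedSub : AddSubgroup A where
  carrier := {a | ∀ g : G, g • a = a}
  zero_mem' := by intro g; simp
  add_mem' := by intro a b ha hb g; rw [smul_add, ha g, hb g]
  neg_mem' := by intro a ha g; rw [smul_neg, ha g]

/-- The subgroup `p·H⁰(G, A)` of `H⁰(G, A)`. -/
def pMulFixed (p : ℕ) : AddSubgroup (fixedSub G A) where
  carrier := {x | ∃ y : fixedSub G A, p • y = x}
  zero_mem' := ⟨0, by simp⟩
  add_mem' := by rintro x₁ x₂ ⟨y₁, hy₁⟩ ⟨y₂, hy₂⟩; exact ⟨y₁ + y₂, by rw [smul_add, hy₁, hy₂]⟩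
  neg_mem' := by rintro x ⟨y, hy⟩; exact ⟨-y, by rw [smul_neg, hy]⟩

/-- Cocycles vanishing on a normal subgroup `I` (inflated classes). -/
def trivOnI (I : Subgroup G) : AddSubgroup (Z1 G A) where
  carrier := {f | ∀ i ∈ I, (f : G → A) i = 0}
  zero_mem' := by intro i _; rfl
  add_mem' := by
    intro f₁ f₂ h₁ h₂ i hi
    show (f₁ : G → A) i + (f₂ : G → A) i = 0
    rw [h₁ i hi, h₂ i hi, add_zero]
  neg_mem' := by
    intro f hf i hi
    show -((f : G → A) i) = 0
    rw [hf i hi, neg_zero]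

/-- The unramified classes `H¹_nr(G, A)`: the image of inflation from `G/I`, i.e. the
image in `H¹(G, A)` of the cocycles vanishing on `I`. -/
def H1nr (I : Subgroup G) : AddSubgroup (H1 G A) :=
  (trivOnI G A I).map (QuotientAddGroup.mk' _)

variable (I : Subgroup G) [I.Normal]

/-- Conjugation action of `g : G` on `1`-cocycles of a normal subgroup `I`. -/
def conjAct1 (g : G) : Z1 I A →+ Z1 I A where
  toFun f := ⟨fun i => g • (f : I → A) ⟨g⁻¹ * (i : G) * g, by
      simpa using Subgroup.Normal.conj_mem ‹I.Normal› (i : G) i.2 g⁻¹⟩, by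
    intro i j
    have hmem : ∀ x : G, x ∈ I → g⁻¹ * x * g ∈ I := fun x hx => by
      simpa using Subgroup.Normal.conj_mem ‹I.Normal› x hx g⁻¹
    have key := f.2 ⟨g⁻¹ * (i : G) * g, hmem _ i.2⟩ ⟨g⁻¹ * (j : G) * g, hmem _ j.2⟩
    have heq : (⟨g⁻¹ * (i : G) * g, hmem _ i.2⟩ * ⟨g⁻¹ * (j : G) * g, hmem _ j.2⟩ : I)
        = ⟨g⁻¹ * ((i : G) * (j : G)) * g, hmem _ (mul_mem i.2 j.2)⟩ := by
      ext
      show g⁻¹ * (i : G) * g * (g⁻¹ * (j : G) * g) = g⁻¹ * ((i : G) * (j : G)) * g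
      group
    rw [heq] at key
    show g • (f : I → A) _ = g • (f : I → A) _ + (i : G) • (g • (f : I → A) _)
    simp only [Subgroup.coe_mul]
    rw [key, smul_add]
    congr 1
    have hdef : (⟨g⁻¹ * (i : G) * g, hmem _ i.2⟩ : I) • (f : I → A) ⟨g⁻¹ * (j : G) * g, hmem _ j.2⟩
        = (g⁻¹ * (i : G) * g) • (f : I → A) ⟨g⁻¹ * (j : G) * g, hmem _ j.2⟩ := rfl
    rw [hdef, smul_smul]
    have hg : g * (g⁻¹ * (i : G) * g) = (i : G) * g := by group
    rw [hg, mul_smul]⟩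
  map_zero' := by ext i; simp
  map_add' f₁ f₂ := by ext i; simp

/-- The conjugation action of `g : G` on `H¹(I, A)`. -/
def H1conj (g : G) : H1 I A →+ H1 I A :=
  QuotientAddGroup.map _ _ (conjAct1 G A I g) (by
    rintro ⟨f, hfZ⟩ hmem
    rcases hmem with ⟨a, ha⟩
    refine ⟨g • a, fun i => ?_⟩
    have hmem' : g⁻¹ * (i : G) * g ∈ I := by
      simpa using Subgroup.Normal.conj_mem ‹I.Normal› (i : G) i.2 g⁻¹
    have h1 := ha ⟨g⁻¹ * (i : G) * g, hmem'⟩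
    try simp only [AddSubgroup.coe_subtype] at h1 ⊢
    show g • f ⟨g⁻¹ * (i : G) * g, hmem'⟩ = (i : G) • (g • a) - g • a
    have h2 : f ⟨g⁻¹ * (i : G) * g, hmem'⟩ = (g⁻¹ * (i : G) * g) • a - a := h1
    rw [h2, smul_sub, smul_smul, smul_smul]
    have hg : g * (g⁻¹ * (i : G) * g) = (i : G) * g := by group
    rw [hg, mul_smul])

/-- The `G/I`-invariants of `H¹(I, A)`. -/
def H1Iinv : AddSubgroup (H1 I A) where
  carrier := {x | ∀ g : G, H1conj G A I g x = x}
  zero_mem' := by intro g; simp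
  add_mem' := by intro x y hx hy g; rw [map_add, hx g, hy g]
  neg_mem' := by intro x hx g; rw [map_neg, hx g]

/-- Conjugation action of `g : G` on `H⁰(I, A)/p·H⁰(I, A)`. -/
def conj0 (p : ℕ) (g : G) :
    (fixedSub I A ⧸ pMulFixed I A p) →+ (fixedSub I A ⧸ pMulFixed I A p) :=
  QuotientAddGroup.map _ _
    { toFun := fun a => ⟨g • (a : A), by
        intro i
        have hmem' : g⁻¹ * (i : G) * g ∈ I := by
          simpa using Subgroup.Normal.conj_mem ‹I.Normal› (i : G) i.2 g⁻¹
        have h1 : (g⁻¹ * (i : G) * g) • (a : A) = (a : A) := a.2 ⟨_, hmem'⟩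
        show (i : G) • (g • (a : A)) = g • (a : A)
        rw [smul_smul, show (i : G) * g = g * (g⁻¹ * (i : G) * g) by group, mul_smul, h1]⟩
      map_zero' := by ext; simp
      map_add' := fun a b => by ext; simp [smul_add] } (by
    rintro x ⟨y, rfl⟩
    refine ⟨⟨g • (y : A), ?_⟩, ?_⟩
    · intro i
      have hmem' : g⁻¹ * (i : G) * g ∈ I := by
        simpa using Subgroup.Normal.conj_mem ‹I.Normal› (i : G) i.2 g⁻¹
      have h1 : (g⁻¹ * (i : G) * g) • (y : A) = (y : A) := y.2 ⟨_, hmem'⟩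
      show (i : G) • (g • (y : A)) = g • (y : A)
      rw [smul_smul, show (i : G) * g = g * (g⁻¹ * (i : G) * g) by group, mul_smul, h1]
    · ext
      show p • (g • (y : A)) = g • ((p • y : fixedSub I A) : A)
      have := (DistribMulAction.toAddMonoidHom A g).map_nsmul p (y : A)
      simpa using this.symm)

/-- The `G/I`-invariants of `H⁰(I, A)/p·H⁰(I, A)`. -/
def inv0 (p : ℕ) : AddSubgroup (fixedSub I A ⧸ pMulFixed I A p) where
  carrier := {x | ∀ g : G, conj0 G A I p g x = x}
  zero_mem' := by intro g; simp
  add_mem' := by intro x y hx hy g; rw [map_add, hx g, hy g]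
  neg_mem' := by intro x hx g; rw [map_neg, hx g]

/-- `H¹(G, A[p])` is killed by `p`, so the natural map to `H¹(G, A)` lands in the
`p`-torsion subgroup `H¹(G, A)[p]`. -/
def H1mapTors (p : ℕ) : H1 G (ptors A p) →+ (ptors (H1 G A) p) :=
  AddMonoidHom.codRestrict (H1map G ((ptors A p).subtype) (fun _ _ => rfl)) _
    (by
      intro x
      show p • (H1map G ((ptors A p).subtype) (fun _ _ => rfl)) x = 0
      rw [← map_nsmul]
      have hx : p • x = 0 := by
        refine QuotientAddGroup.induction_on x ?_
        intro f
        have hz : p • f = (0 : Z1 G (ptors A p)) := by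
          ext g
          have h3 : p • (((f : G → ptors A p) g : ptors A p) : A) = 0 :=
            ((f : G → ptors A p) g).2
          simpa using h3
        rw [← QuotientAddGroup.mk_nsmul, hz]
        rfl
      rw [hx, map_zero])

/-- The natural map `H¹(G, A[p])/H¹_nr(G, A[p]) → H¹(G, A)[p]/H¹_nr(G, A)[p]`. -/
def bigMap (p : ℕ) :
    (H1 G (ptors A p) ⧸ H1nr G (ptors A p) I) →+
      ((ptors (H1 G A) p) ⧸ (H1nr G A I).addSubgroupOf (ptors (H1 G A) p)) :=
  QuotientAddGroup.map _ _ (H1mapTors G A p) (by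
    intro x hx
    rcases AddSubgroup.mem_map.mp hx with ⟨f, hf, rfl⟩
    rw [AddSubgroup.mem_comap, AddSubgroup.mem_addSubgroupOf]
    refine AddSubgroup.mem_map.mpr ⟨Z1map G ((ptors A p).subtype) (fun _ _ => rfl) f, ?_, ?_⟩
    · intro i hi
      show ((ptors A p).subtype) ((f : G → ptors A p) i) = 0
      have h0 : (f : G → ptors A p) i = 0 := hf i hi
      rw [h0, map_zero]
    · rfl)

/-- The kernel of `H¹(I, A[p])^{G/I} → H¹(I, A)^{G/I}[p]`: invariant classes in
`H¹(I, A[p])` mapping to zero in `H¹(I, A)`. -/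
def midKer (p : ℕ) : AddSubgroup (H1 I (ptors A p)) :=
  H1Iinv G (ptors A p) I ⊓
    AddMonoidHom.ker (H1map I ((ptors A p).subtype) (fun _ _ => rfl))

end

/-! Restriction to `I` kills the unramified classes, and a class of `H¹(G, A[p])` whose
restriction is a coboundary `i ↦ i • a - a` becomes a cocycle vanishing on `I` after
subtracting the coboundary of `a` (inflation–restriction); so restriction is injective on
`H¹(G, A[p]) / H¹_nr`, and it lands in the `G/I`-invariant classes of `H¹(I, A[p])` that die
in `H¹(I, A)`. Since multiplication by `p` is onto `A`, the Kummer map sending `c ∈ A^I` to the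
class of `i ↦ i • b - b`, for any `b` with `p • b = c`, identifies `A^I / p A^I` with the kernel
of `H¹(I, A[p]) → H¹(I, A)`; it commutes with the conjugation actions, hence matches the
`G/I`-invariants on both sides. -/

section Cocycles

variable {G : Type*} [Group G] {A : Type*} [AddCommGroup A] [DistribMulAction G A]

theorem Z1.apply_one (f : Z1 G A) : (f : G → A) 1 = 0 := by
  simpa using f.2 1 1

theorem Z1.smul_apply_inv (f : Z1 G A) (g : G) : g • (f : G → A) g⁻¹ = -(f : G → A) g := by
  have h := f.2 g g⁻¹
  rw [mul_inv_cancel, Z1.apply_one] at h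
  exact (neg_eq_of_add_eq_zero_right h.symm).symm

variable (G) in
def Z1.coboundary (a : A) : Z1 G A :=
  ⟨fun g => g • a - a, fun g h => by simp only [mul_smul, smul_sub]; abel⟩

theorem H1.mk_eq_zero_iff (f : Z1 G A) :
    (f : H1 G A) = 0 ↔ ∃ a : A, ∀ g : G, (f : G → A) g = g • a - a := by
  rw [QuotientAddGroup.eq_zero_iff, AddSubgroup.mem_addSubgroupOf]
  rfl

theorem H1.mk_coboundary (a : A) : (Z1.coboundary G a : H1 G A) = 0 :=
  (H1.mk_eq_zero_iff _).2 ⟨a, fun _ => rfl⟩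

end Cocycles

section Restriction

variable {G : Type*} [Group G] {A : Type*} [AddCommGroup A] [DistribMulAction G A]
variable (I : Subgroup G)

def resZ1 : Z1 G A →+ Z1 I A where
  toFun f := ⟨fun i => (f : G → A) i, fun i j => f.2 i j⟩
  map_zero' := rfl
  map_add' _ _ := rfl

@[simp]
theorem resZ1_apply (f : Z1 G A) (i : I) : (resZ1 I f : I → A) i = (f : G → A) i := rfl

def H1res : H1 G A →+ H1 I A :=
  QuotientAddGroup.map _ _ (resZ1 I) (by
    rintro f ⟨a, ha⟩
    exact ⟨a, fun i => ha i⟩)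

theorem H1res_H1map {B : Type*} [AddCommGroup B] [DistribMulAction G B] (φ : A →+ B)
    (hφ : ∀ (g : G) (a : A), φ (g • a) = g • φ a) (x : H1 G A) :
    H1res I (H1map G φ hφ x) = H1map I φ (fun i a => hφ i a) (H1res I x) := by
  induction x using QuotientAddGroup.induction_on
  rfl

theorem H1nr_le_ker_H1res : H1nr G A I ≤ (H1res I).ker := by
  rintro _ ⟨f, hf, rfl⟩
  exact (H1.mk_eq_zero_iff _).2 ⟨0, fun i => by rw [smul_zero, sub_zero]; exact hf i i.2⟩

variable [I.Normal]

theorem conjAct1_resZ1_apply (g : G) (f : Z1 G A) (i : I) :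
    (conjAct1 G A I g (resZ1 I f) : I → A) i
      = (f : G → A) i + (i : G) • (f : G → A) g - (f : G → A) g := by
  show g • (f : G → A) (g⁻¹ * (i : G) * g) = _
  rw [mul_assoc, f.2, f.2, smul_add, smul_smul, mul_inv_cancel, one_smul, Z1.smul_apply_inv]
  abel

theorem H1res_mem_H1Iinv (x : H1 G A) : H1res I x ∈ H1Iinv G A I := by
  induction x using QuotientAddGroup.induction_on with | H f => ?_
  intro g
  show ((conjAct1 G A I g (resZ1 I f) : Z1 I A) : H1 I A) = resZ1 I f
  rw [← sub_eq_zero, ← QuotientAddGroup.mk_sub, H1.mk_eq_zero_iff]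
  refine ⟨(f : G → A) g, fun i => ?_⟩
  simp only [AddSubgroup.coe_sub, Pi.sub_apply, conjAct1_resZ1_apply, resZ1_apply,
    Subgroup.smul_def]
  abel

end Restriction

section InflationRestriction

variable {G : Type*} [Group G] {A : Type*} [AddCommGroup A] [DistribMulAction G A]
variable (I : Subgroup G)

def H1resModNr : H1 G A ⧸ H1nr G A I →+ H1 I A :=
  QuotientAddGroup.lift _ (H1res I) (H1nr_le_ker_H1res I)

theorem H1resModNr_injective : Function.Injective (H1resModNr I (A := A)) := by
  refine (injective_iff_map_eq_zero _).2 fun x hx => ?_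
  induction x using QuotientAddGroup.induction_on with | H y => ?_
  induction y using QuotientAddGroup.induction_on with | H f => ?_
  obtain ⟨a, ha⟩ := (H1.mk_eq_zero_iff _).1 hx
  refine (QuotientAddGroup.eq_zero_iff _).2 ⟨f - Z1.coboundary G a, fun i hi => ?_, ?_⟩
  · exact sub_eq_zero.2 (ha ⟨i, hi⟩)
  · simp [H1.mk_coboundary]

variable {p : ℕ}

theorem H1map_mem_H1nr_of_mem_ker_bigMap {y : H1 G (ptors A p)}
    (hy : (y : H1 G (ptors A p) ⧸ H1nr G (ptors A p) I) ∈ (bigMap G A I p).ker) :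
    H1map G (ptors A p).subtype (fun _ _ => rfl) y ∈ H1nr G A I :=
  (QuotientAddGroup.eq_zero_iff (H1mapTors G A p y)).1 (AddMonoidHom.mem_ker.1 hy)

variable [I.Normal]

theorem H1resModNr_mem_midKer {x : H1 G (ptors A p) ⧸ H1nr G (ptors A p) I}
    (hx : x ∈ (bigMap G A I p).ker) : H1resModNr I x ∈ midKer G A I p := by
  induction x using QuotientAddGroup.induction_on with | H y => ?_
  exact ⟨H1res_mem_H1Iinv I y, (H1res_H1map I _ _ y).symm.trans
    (H1nr_le_ker_H1res I (H1map_mem_H1nr_of_mem_ker_bigMap I hx))⟩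

variable (A p) in
def kerBigMapToMidKer : (bigMap G A I p).ker →+ midKer G A I p :=
  ((H1resModNr I).comp (bigMap G A I p).ker.subtype).codRestrict _
    fun x => H1resModNr_mem_midKer I x.2

theorem kerBigMapToMidKer_injective : Function.Injective (kerBigMapToMidKer A I p) :=
  fun _ _ h => Subtype.ext (H1resModNr_injective I (congrArg Subtype.val h))

end InflationRestriction

section Kummer

variable {H : Type*} [Group H] {A : Type*} [AddCommGroup A] [DistribMulAction H A] {p : ℕ}

def kummerZ1 (c : fixedSub H A) (b : A) (hb : p • b = c) : Z1 H (ptors A p) :=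
  ⟨fun h => ⟨h • b - b, show p • (h • b - b) = 0 by
      rw [smul_sub, smul_comm, hb, c.2 h, sub_self]⟩,
    fun h k => Subtype.ext <| show (h * k) • b - b = (h • b - b) + h • (k • b - b) by
      rw [mul_smul, smul_sub]; abel⟩

theorem mk_kummerZ1_eq (c : fixedSub H A) {b b' : A} (hb : p • b = c) (hb' : p • b' = c) :
    (kummerZ1 c b hb : H1 H (ptors A p)) = kummerZ1 c b' hb' := by
  rw [← sub_eq_zero, ← QuotientAddGroup.mk_sub, H1.mk_eq_zero_iff]
  refine ⟨⟨b - b', show p • (b - b') = 0 by rw [smul_sub, hb, hb', sub_self]⟩, fun h => ?_⟩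
  apply Subtype.ext
  show (h • b - b) - (h • b' - b') = h • (b - b') - (b - b')
  rw [smul_sub]
  abel

theorem kummerZ1_add (c c' : fixedSub H A) {b b' : A} (hb : p • b = c) (hb' : p • b' = c') :
    kummerZ1 (c + c') (b + b') (by rw [smul_add, hb, hb']; rfl)
      = kummerZ1 c b hb + kummerZ1 c' b' hb' :=
  Subtype.ext <| funext fun h => Subtype.ext <|
    show h • (b + b') - (b + b') = (h • b - b) + (h • b' - b') by rw [smul_add]; abel

variable (hdiv : ∀ a : A, ∃ b : A, p • b = a)

noncomputable def kummer : fixedSub H A →+ H1 H (ptors A p) :=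
  AddMonoidHom.mk' (fun c => kummerZ1 c _ (hdiv c).choose_spec) fun c c' => by
    rw [← QuotientAddGroup.mk_add, ← kummerZ1_add]
    exact mk_kummerZ1_eq _ _ _

theorem kummer_apply (c : fixedSub H A) {b : A} (hb : p • b = c) :
    kummer hdiv c = kummerZ1 c b hb :=
  mk_kummerZ1_eq _ _ _

theorem kummer_eq_zero_iff (c : fixedSub H A) : kummer hdiv c = 0 ↔ c ∈ pMulFixed H A p := by
  constructor
  · intro hc
    obtain ⟨b, hb⟩ := hdiv c
    obtain ⟨t, ht⟩ := (H1.mk_eq_zero_iff _).1 ((kummer_apply hdiv c hb).symm.trans hc)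
    have hfix : b - t ∈ fixedSub H A := fun h => by
      rw [smul_sub]
      exact sub_eq_sub_iff_sub_eq_sub.mp (congrArg Subtype.val (ht h))
    exact ⟨⟨b - t, hfix⟩, Subtype.ext (show p • (b - t) = c by rw [smul_sub, hb, t.2, sub_zero])⟩
  · rintro ⟨y, rfl⟩
    rw [kummer_apply hdiv _ (rfl : p • (y : A) = ↑(p • y))]
    refine (H1.mk_eq_zero_iff _).2 ⟨0, fun h => Subtype.ext ?_⟩
    show h • (y : A) - y = h • (0 : A) - 0
    rw [y.2 h, sub_self, smul_zero, sub_zero]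

noncomputable def kummerMod : (fixedSub H A ⧸ pMulFixed H A p) →+ H1 H (ptors A p) :=
  QuotientAddGroup.lift _ (kummer hdiv) fun c hc => (kummer_eq_zero_iff hdiv c).2 hc

theorem kummerMod_injective : Function.Injective (kummerMod (H := H) hdiv) := by
  refine (injective_iff_map_eq_zero _).2 fun x hx => ?_
  induction x using QuotientAddGroup.induction_on with | H c => ?_
  exact (QuotientAddGroup.eq_zero_iff c).2 ((kummer_eq_zero_iff hdiv c).1 hx)

theorem H1map_subtype_eq_zero_iff_exists_kummerMod (y : H1 H (ptors A p)) :
    H1map H (ptors A p).subtype (fun _ _ => rfl) y = 0 ↔ ∃ x, kummerMod hdiv x = y := by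
  constructor
  · induction y using QuotientAddGroup.induction_on with | H f => ?_
    intro hf
    obtain ⟨a, ha⟩ := (H1.mk_eq_zero_iff _).1 hf
    have hfix : p • a ∈ fixedSub H A := fun h => by
      have h0 : p • (h • a - a) = 0 := ha h ▸ ((f : H → ptors A p) h).2
      rwa [smul_sub, smul_comm, sub_eq_zero] at h0
    refine ⟨(⟨p • a, hfix⟩ : fixedSub H A), (kummer_apply hdiv _ rfl).trans (congrArg _ ?_)⟩
    exact Subtype.ext <| funext fun h => Subtype.ext (ha h).symm
  · rintro ⟨x, rfl⟩
    induction x using QuotientAddGroup.induction_on with | H c => ?_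
    obtain ⟨b, hb⟩ := hdiv c
    exact (congrArg _ (kummer_apply hdiv c hb)).trans ((H1.mk_eq_zero_iff _).2 ⟨b, fun _ => rfl⟩)

end Kummer

section KummerEquivariance

variable {G : Type*} [Group G] {A : Type*} [AddCommGroup A] [DistribMulAction G A]
variable (I : Subgroup G) [I.Normal] {p : ℕ} (hdiv : ∀ a : A, ∃ b : A, p • b = a)

theorem smul_mem_fixedSub (g : G) {c : A} (hc : c ∈ fixedSub I A) : g • c ∈ fixedSub I A :=
  fun i => by
    have hconj : g⁻¹ * (i : G) * g ∈ I := by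
      simpa using Subgroup.Normal.conj_mem ‹I.Normal› (i : G) i.2 g⁻¹
    show (i : G) • g • c = g • c
    have hfix : (g⁻¹ * (i : G) * g) • c = c := hc ⟨_, hconj⟩
    rw [smul_smul, show (i : G) * g = g * (g⁻¹ * (i : G) * g) by group, mul_smul, hfix]

theorem H1conj_kummerMod (g : G) (x : fixedSub I A ⧸ pMulFixed I A p) :
    H1conj G (ptors A p) I g (kummerMod hdiv x) = kummerMod hdiv (conj0 G A I p g x) := by
  induction x using QuotientAddGroup.induction_on with | H c => ?_
  obtain ⟨b, hb⟩ := hdiv c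
  have hgb : p • (g • b) = g • (c : A) := by rw [smul_comm, hb]
  calc H1conj G (ptors A p) I g (kummerMod hdiv c)
      = (conjAct1 G (ptors A p) I g (kummerZ1 c b hb) : H1 I (ptors A p)) :=
        congrArg (H1conj G (ptors A p) I g) (kummer_apply hdiv c hb)
    _ = kummerZ1 ⟨g • (c : A), smul_mem_fixedSub I g c.2⟩ (g • b) hgb :=
        congrArg _ (Subtype.ext <| funext fun i => Subtype.ext ?_)
    _ = kummerMod hdiv (conj0 G A I p g c) := (kummer_apply hdiv _ hgb).symm
  show g • ((g⁻¹ * (i : G) * g) • b - b) = (i : G) • g • b - g • b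
  rw [smul_sub, smul_smul, show g * (g⁻¹ * (i : G) * g) = (i : G) * g by group, mul_smul]

theorem kummerMod_mem_H1Iinv_iff (x : fixedSub I A ⧸ pMulFixed I A p) :
    kummerMod hdiv x ∈ H1Iinv G (ptors A p) I ↔ x ∈ inv0 G A I p :=
  forall_congr' fun g => by rw [H1conj_kummerMod, (kummerMod_injective hdiv).eq_iff]

noncomputable def inv0ToMidKer : inv0 G A I p →+ midKer G A I p :=
  ((kummerMod hdiv).comp (inv0 G A I p).subtype).codRestrict _ fun x =>
    ⟨(kummerMod_mem_H1Iinv_iff I hdiv x).2 x.2,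
      (H1map_subtype_eq_zero_iff_exists_kummerMod hdiv _).2 ⟨_, rfl⟩⟩

theorem inv0ToMidKer_bijective : Function.Bijective (inv0ToMidKer I hdiv) := by
  refine ⟨fun x y h => Subtype.ext (kummerMod_injective hdiv (congrArg Subtype.val h)), ?_⟩
  rintro ⟨y, hinv, hker⟩
  obtain ⟨x, rfl⟩ := (H1map_subtype_eq_zero_iff_exists_kummerMod hdiv y).1 hker
  exact ⟨⟨x, (kummerMod_mem_H1Iinv_iff I hdiv x).1 hinv⟩, rfl⟩

end KummerEquivariance

/-- For `I ⊴ G` and a `G`-module `A` with multiplication by `p` surjective,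
the kernel of the natural map
`H¹(G, A[p])/H¹_nr(G, A[p]) → H¹(G, A)[p]/H¹_nr(G, A)[p]`
injects into `ker(H¹(I, A[p])^{G/I} → H¹(I, A)^{G/I}[p])`, which is isomorphic to
`(H⁰(I, A)/p·H⁰(I, A))^{G/I}`. -/
theorem stmt15 (G : Type*) [Group G] (A : Type*) [AddCommGroup A] [DistribMulAction G A]
    (I : Subgroup G) [I.Normal] (p : ℕ) (hdiv : ∀ a : A, ∃ b : A, p • b = a) :
    (∃ j : (AddMonoidHom.ker (bigMap G A I p)) →+ (midKer G A I p),
      Function.Injective j) ∧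
    Nonempty ((midKer G A I p) ≃+ (inv0 G A I p)) :=
  ⟨⟨kerBigMapToMidKer A I p, kerBigMapToMidKer_injective I⟩,
    ⟨(AddEquiv.ofBijective _ (inv0ToMidKer_bijective I hdiv)).symm⟩⟩
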